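/- arXiv:1902.05205 — 4 statements merged into one kernel-verified Lean document; each statement's English description precedes it below -/
import Mathlib

section
/- Correctness of ST-to-hybrid-program compilation: for the loop-free ST program language with assignment x := θ, sequential composition, if-then-else, and if-then, and its small-step operational semantics, every terminating run of an ST program s from context σ to context ω (reaching the terminal program skip) implies that the pair (σ, ω) is in the transition relation of the compiled hybrid program ST(s). -/
abbrev Var := String
abbrev State := Var → ℝ

inductive Term where
  | var : Var → Term
  | num : ℝ → Term
  | neg : Term → Term
  | add : Term → Term → Term
  | sub : Term → Term → Term
  | mul : Term → Term → Term
  | div : Term → Term → Term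

noncomputable def Term.val : Term → State → ℝ
  | .var x, σ => σ x
  | .num n, _ => n
  | .neg t, σ => -(t.val σ)
  | .add t u, σ => t.val σ + u.val σ
  | .sub t u, σ => t.val σ - u.val σ
  | .mul t u, σ => t.val σ * u.val σ
  | .div t u, σ => t.val σ / u.val σ

/-- Quantifier-free formulas over real arithmetic (shared, compilation of
formulas between ST and dL is the identity on this representation). -/
inductive Formula where
  | tt : Formula
  | ff : Formula
  | lt : Term → Term → Formula
  | le : Term → Term → Formula
  | eq : Term → Term → Formula
  | ge : Term → Term → Formula
  | gt : Term → Term → Formula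
  | ne : Term → Term → Formula
  | not : Formula → Formula
  | and : Formula → Formula → Formula
  | or : Formula → Formula → Formula

def Formula.sat : Formula → State → Prop
  | .tt, _ => True
  | .ff, _ => False
  | .lt t u, σ => t.val σ < u.val σ
  | .le t u, σ => t.val σ ≤ u.val σ
  | .eq t u, σ => t.val σ = u.val σ
  | .ge t u, σ => t.val σ ≥ u.val σ
  | .gt t u, σ => t.val σ > u.val σ
  | .ne t u, σ => t.val σ ≠ u.val σ
  | .not φ, σ => ¬ φ.sat σ
  | .and φ ψ, σ => φ.sat σ ∧ ψ.sat σ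
  | .or φ ψ, σ => φ.sat σ ∨ ψ.sat σ

/-- Loop-free ST programs. -/
inductive STProg where
  | assign : Var → Term → STProg
  | ite : Formula → STProg → STProg → STProg
  | ifThen : Formula → STProg → STProg
  | seq : STProg → STProg → STProg

/-- Operational semantics of ST programs: terminating executions to `skip`. -/
inductive BigStep : STProg → State → State → Prop where
  | assign {x θ σ} : BigStep (.assign x θ) σ (Function.update σ x (θ.val σ))
  | seq {s₁ s₂ σ μ ω} : BigStep s₁ σ μ → BigStep s₂ μ ω → BigStep (.seq s₁ s₂) σ ω
  | iteT {φ s₁ s₂ σ ω} : φ.sat σ → BigStep s₁ σ ω → BigStep (.ite φ s₁ s₂) σ ω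
  | iteF {φ s₁ s₂ σ ω} : ¬ φ.sat σ → BigStep s₂ σ ω → BigStep (.ite φ s₁ s₂) σ ω
  | ifT {φ s₁ σ ω} : φ.sat σ → BigStep s₁ σ ω → BigStep (.ifThen φ s₁) σ ω
  | ifF {φ s₁ σ} : ¬ φ.sat σ → BigStep (.ifThen φ s₁) σ σ

/-- Translatable hybrid programs: x := θ | ?φ | α ∪ β | α; β. -/
inductive HP where
  | assign : Var → Term → HP
  | test : Formula → HP
  | choice : HP → HP → HP
  | seq : HP → HP → HP

/-- Denotational relational semantics of hybrid programs. -/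
def HP.sem : HP → State → State → Prop
  | .assign x θ => fun σ ω => ω = Function.update σ x (θ.val σ)
  | .test φ => fun σ ω => ω = σ ∧ φ.sat σ
  | .choice a b => fun σ ω => a.sem σ ω ∨ b.sem σ ω
  | .seq a b => fun σ ω => ∃ μ, a.sem σ μ ∧ b.sem μ ω

/-- Compilation of ST programs to hybrid programs. -/
def STc : STProg → HP
  | .assign x θ => .assign x θ
  | .seq s₁ s₂ => .seq (STc s₁) (STc s₂)
  | .ite φ s₁ s₂ => .choice (.seq (.test φ) (STc s₁)) (.seq (.test (.not φ)) (STc s₂))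
  | .ifThen φ s₁ => .choice (.seq (.test φ) (STc s₁)) (.test (.not φ))

/-- Correctness of ST-to-hybrid-program compilation. -/
theorem st_to_hp_correct (s : STProg) (σ ω : State) :
    BigStep s σ ω → (STc s).sem σ ω := by
  intro h
  induction h with
  | assign => rfl
  | seq _ _ ih1 ih2 => exact ⟨_, ih1, ih2⟩
  | iteT hφ _ ih => exact Or.inl ⟨_, ⟨rfl, hφ⟩, ih⟩
  | iteF hφ _ ih => exact Or.inr ⟨_, ⟨rfl, hφ⟩, ih⟩
  | ifT hφ _ ih => exact Or.inl ⟨_, ⟨rfl, hφ⟩, ih⟩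
  | ifF hφ => exact Or.inr ⟨rfl, hφ⟩
end

section
/- Correctness of hybrid-program-to-ST compilation: for the translatable fragment of hybrid programs (assignments, sequential composition, guarded choices (?φ;α) ∪ β, if-then-else choices (?φ;α) ∪ (?¬φ;β), and if-then choices (?φ;α) ∪ ?¬φ), if the compiled ST program HP(α) executes to completion from context σ reaching context ω, then (σ, ω) is in the denotational transition relation of α. -/
/-- Translatable fragment of hybrid programs:
x := θ | (?φ;α) ∪ β | (?φ;α) ∪ (?¬φ;β) | (?φ;α) ∪ ?¬φ | α; β. -/
inductive THP where
  | assign : Var → Term → THP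
  /-- guarded choice (?φ;α) ∪ β -/
  | choiceDefault : Formula → THP → THP → THP
  /-- if-then-else choice (?φ;α) ∪ (?¬φ;β) -/
  | ite : Formula → THP → THP → THP
  /-- if-then choice (?φ;α) ∪ ?¬φ -/
  | ifThen : Formula → THP → THP
  | seq : THP → THP → THP

/-- Standard dL relational semantics of the translatable fragment. -/
def THP.sem : THP → State → State → Prop
  | .assign x θ => fun σ ω => ω = Function.update σ x (θ.val σ)
  | .choiceDefault φ a b => fun σ ω => (φ.sat σ ∧ a.sem σ ω) ∨ b.sem σ ω
  | .ite φ a b => fun σ ω => (φ.sat σ ∧ a.sem σ ω) ∨ (¬ φ.sat σ ∧ b.sem σ ω)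
  | .ifThen φ a => fun σ ω => (φ.sat σ ∧ a.sem σ ω) ∨ (¬ φ.sat σ ∧ ω = σ)
  | .seq a b => fun σ ω => ∃ μ, a.sem σ μ ∧ b.sem μ ω

/-- Compilation of translatable hybrid programs to ST programs. -/
def HPc : THP → STProg
  | .assign x θ => .assign x θ
  | .choiceDefault φ a b => .ite φ (HPc a) (HPc b)
  | .ite φ a b => .ite φ (HPc a) (HPc b)
  | .ifThen φ a => .ifThen φ (HPc a)
  | .seq a b => .seq (HPc a) (HPc b)

/-- Correctness of hybrid-program-to-ST compilation. -/
theorem hp_to_st_correct (α : THP) (σ ω : State) :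
    BigStep (HPc α) σ ω → α.sem σ ω := by
  induction α generalizing σ ω with
  | assign x θ => intro h; cases h; rfl
  | choiceDefault φ a b iha ihb =>
    intro h; cases h with
    | iteT hφ hs => exact Or.inl ⟨hφ, iha _ _ hs⟩
    | iteF hφ hs => exact Or.inr (ihb _ _ hs)
  | ite φ a b iha ihb =>
    intro h; cases h with
    | iteT hφ hs => exact Or.inl ⟨hφ, iha _ _ hs⟩
    | iteF hφ hs => exact Or.inr ⟨hφ, ihb _ _ hs⟩
  | ifThen φ a iha =>
    intro h; cases h with
    | ifT hφ hs => exact Or.inl ⟨hφ, iha _ _ hs⟩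
    | ifF hφ => exact Or.inr ⟨hφ, rfl⟩
  | seq a b iha ihb =>
    intro h; cases h with
    | seq h1 h2 => exact ⟨_, iha _ _ h1, ihb _ _ h2⟩
end

section
/- Compilation Safety: Suppose the dL formula A → [(input; ctrl; plant)*] S is valid, where input, ctrl, plant are hybrid programs. Suppose every terminating execution of the compiled ST program HP(ctrl) from σ to ω satisfies (σ, ω) ∈ [[ctrl]] (correctness of HP-to-ST compilation). Then for every run σ₀, σ₁, …, σₙ of HP(ctrl) with the given input and plant—i.e., for each i < n there are states μᵢ, νᵢ with (σᵢ, μᵢ) ∈ [[input]], HP(ctrl) executes from μᵢ to completion in νᵢ, and (νᵢ, σᵢ₊₁) ∈ [[plant]]—if σ₀ ⊨ A, then σᵢ ⊨ S for all i ≤ n. -/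
/-- Compilation Safety (Theorem 1 of the paper), stated abstractly over the
relational denotational semantics of the hybrid programs `input`, `ctrl`,
`plant` on a state space `S`, and an execution relation `Exec` of the compiled
ST program HP(ctrl). -/
theorem compilation_safety {S : Type*}
    (Input Ctrl Plant : S → S → Prop)
    -- Exec σ ω: the compiled ST program HP(ctrl) executes from σ to completion in ω
    (Exec : S → S → Prop)
    (A Safe : S → Prop)
    -- validity of  A → [(input; ctrl; plant)*] S
    (hvalid : ∀ σ ω : S, A σ →
      Relation.ReflTransGen
        (fun a c => ∃ b b', Input a b ∧ Ctrl b b' ∧ Plant b' c) σ ω → Safe ω)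
    -- correctness of HP-to-ST compilation for ctrl
    (hcompile : ∀ σ ω : S, Exec σ ω → Ctrl σ ω)
    -- a run σ₀, σ₁, …, σₙ of HP(ctrl) with the given input and plant
    (n : ℕ) (σ : ℕ → S)
    (hrun : ∀ i < n, ∃ μ ν : S, Input (σ i) μ ∧ Exec μ ν ∧ Plant ν (σ (i + 1)))
    (hA : A (σ 0)) :
    ∀ i ≤ n, Safe (σ i) := by
  have key : ∀ i ≤ n, Relation.ReflTransGen
      (fun a c => ∃ b b', Input a b ∧ Ctrl b b' ∧ Plant b' c) (σ 0) (σ i) := by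
    intro i hi
    induction i with
    | zero => exact Relation.ReflTransGen.refl
    | succ k ih =>
      obtain ⟨μ, ν, h1, h2, h3⟩ := hrun k (by omega)
      exact (ih (by omega)).tail ⟨μ, ν, h1, hcompile _ _ h2, h3⟩
  exact fun i hi => hvalid _ _ hA (key i hi)
end

section
/- The transition relation of the compiled hybrid program of an ST program is exactly the graph of the ST program's execution function: for every loop-free ST program s, [[ST(s)]] = {(σ, ω) : s executes from σ to completion in ω}. In particular, [[ST(s)]] is the graph of a total function on states. -/
/-- The transition relation of the compiled hybrid program of an ST program is
exactly the graph of the ST program's (total, deterministic) execution. -/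
theorem compiled_hp_is_graph (s : STProg) :
    (∀ σ ω : State, (STc s).sem σ ω ↔ BigStep s σ ω) ∧
    (∀ σ : State, ∃! ω : State, (STc s).sem σ ω) := by
  have hiff : ∀ s : STProg, ∀ σ ω : State, (STc s).sem σ ω ↔ BigStep s σ ω := by
    intro s
    induction s with
    | assign x θ =>
      intro σ ω
      constructor
      · rintro rfl; exact .assign
      · rintro h; cases h; rfl
    | ite φ s₁ s₂ ih₁ ih₂ =>
      intro σ ω
      constructor
      · rintro (⟨μ, ⟨rfl, hφ⟩, h⟩ | ⟨μ, ⟨rfl, hφ⟩, h⟩)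
        · exact .iteT hφ ((ih₁ _ _).1 h)
        · exact .iteF hφ ((ih₂ _ _).1 h)
      · rintro (_ | _ | ⟨hφ, h⟩ | ⟨hφ, h⟩)
        · exact .inl ⟨σ, ⟨rfl, hφ⟩, (ih₁ _ _).2 h⟩
        · exact .inr ⟨σ, ⟨rfl, hφ⟩, (ih₂ _ _).2 h⟩
    | ifThen φ s₁ ih₁ =>
      intro σ ω
      constructor
      · rintro (⟨μ, ⟨rfl, hφ⟩, h⟩ | ⟨rfl, hφ⟩)
        · exact .ifT hφ ((ih₁ _ _).1 h)
        · exact .ifF hφ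
      · rintro (_ | _ | _ | _ | ⟨hφ, h⟩ | hφ)
        · exact .inl ⟨σ, ⟨rfl, hφ⟩, (ih₁ _ _).2 h⟩
        · exact .inr ⟨rfl, hφ⟩
    | seq s₁ s₂ ih₁ ih₂ =>
      intro σ ω
      constructor
      · rintro ⟨μ, h₁, h₂⟩
        exact .seq ((ih₁ _ _).1 h₁) ((ih₂ _ _).1 h₂)
      · rintro (_ | ⟨h₁, h₂⟩)
        exact ⟨_, (ih₁ _ _).2 h₁, (ih₂ _ _).2 h₂⟩
  have htot : ∀ s : STProg, ∀ σ : State, ∃ ω, BigStep s σ ω := by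
    intro s
    induction s with
    | assign x θ => intro σ; exact ⟨_, .assign⟩
    | ite φ s₁ s₂ ih₁ ih₂ =>
      intro σ
      by_cases hφ : φ.sat σ
      · obtain ⟨ω, h⟩ := ih₁ σ; exact ⟨ω, .iteT hφ h⟩
      · obtain ⟨ω, h⟩ := ih₂ σ; exact ⟨ω, .iteF hφ h⟩
    | ifThen φ s₁ ih₁ =>
      intro σ
      by_cases hφ : φ.sat σ
      · obtain ⟨ω, h⟩ := ih₁ σ; exact ⟨ω, .ifT hφ h⟩
      · exact ⟨σ, .ifF hφ⟩
    | seq s₁ s₂ ih₁ ih₂ =>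
      intro σ
      obtain ⟨μ, h₁⟩ := ih₁ σ
      obtain ⟨ω, h₂⟩ := ih₂ μ
      exact ⟨ω, .seq h₁ h₂⟩
  have hdet : ∀ s : STProg, ∀ σ ω₁ ω₂ : State,
      BigStep s σ ω₁ → BigStep s σ ω₂ → ω₁ = ω₂ := by
    intro s
    induction s with
    | assign x θ =>
      intro σ ω₁ ω₂ h₁ h₂; cases h₁; cases h₂; rfl
    | ite φ s₁ s₂ ih₁ ih₂ =>
      intro σ ω₁ ω₂ h₁ h₂
      cases h₁ with
      | iteT hφ h => cases h₂ with
        | iteT _ h' => exact ih₁ _ _ _ h h'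
        | iteF hφ' _ => exact absurd hφ hφ'
      | iteF hφ h => cases h₂ with
        | iteT hφ' _ => exact absurd hφ' hφ
        | iteF _ h' => exact ih₂ _ _ _ h h'
    | ifThen φ s₁ ih₁ =>
      intro σ ω₁ ω₂ h₁ h₂
      cases h₁ with
      | ifT hφ h => cases h₂ with
        | ifT _ h' => exact ih₁ _ _ _ h h'
        | ifF hφ' => exact absurd hφ hφ'
      | ifF hφ => cases h₂ with
        | ifT hφ' _ => exact absurd hφ' hφ
        | ifF _ => rfl
    | seq s₁ s₂ ih₁ ih₂ =>
      intro σ ω₁ ω₂ h₁ h₂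
      cases h₁ with
      | seq g₁ g₂ => cases h₂ with
        | seq g₁' g₂' =>
          obtain rfl := ih₁ _ _ _ g₁ g₁'
          exact ih₂ _ _ _ g₂ g₂'
  refine ⟨hiff s, fun σ => ?_⟩
  obtain ⟨ω, h⟩ := htot s σ
  exact ⟨ω, (hiff s σ ω).2 h, fun ω' h' => hdet s σ ω' ω ((hiff s σ ω').1 h') h⟩
end
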